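/- arXiv:1512.02662 — 3 statements merged into one kernel-verified Lean document; each statement's English description precedes it below -/
import Mathlib

section
/- Let R be a commutative ring, J an ideal of R[t, x_1, ..., x_n] generated by terms, and > a t-local monomial ordering on the monomials in t and x. If f, u ∈ R[t,x] satisfy u·f ∈ J and the leading term of u with respect to > equals 1, then f ∈ J. -/
/-!
An ideal generated by terms contains every term of each of its elements. If the terms of
`u` other than `1` lie below `1`, then comparing coefficients in `u * f` writes the term of `f`
at `d` as the term of `u * f` at `d` minus products `u_a f_b` with `a < 0`, hence `b > d`.
Induction downwards over the finitely many monomials of `f` then puts every term of `f`,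
and so `f` itself, into the ideal.
-/

open MvPolynomial

/-- A `t`-local monomial ordering on the monomials of `R[t,x₁,…,xₙ]`
(exponent vectors in `Fin (n+1) →₀ ℕ`, variable `0` playing the role of `t`):
`r a b` means `a < b`.  It is a strict total order compatible with the
semigroup structure, and `t`-local means `t < 1` (i.e. `1 > t`, so that the
leading monomial — the largest monomial occurring — of `1 - t` is `1`). -/
def IsTLocalMonomialOrder {n : ℕ} (r : (Fin (n + 1) →₀ ℕ) → (Fin (n + 1) →₀ ℕ) → Prop) : Prop :=
  (∀ a b, a ≠ b → r a b ∨ r b a) ∧ (∀ a, ¬ r a a) ∧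
  (∀ a b c, r a b → r b c → r a c) ∧
  (∀ a b c, r a b → r (a + c) (b + c)) ∧
  r (Finsupp.single 0 1) 0

namespace MvPolynomial

open Finset.HasAntidiagonal

variable {σ R : Type*}

/-- Equivalently: the ideal is generated by terms. -/
def IsMonomialIdeal [CommSemiring R] (I : Ideal (MvPolynomial σ R)) : Prop :=
  ∀ g ∈ I, ∀ d, monomial d (g.coeff d) ∈ I

theorem isMonomialIdeal_span [CommSemiring R] {S : Set (MvPolynomial σ R)}
    (hS : ∀ s ∈ S, ∃ d c, s = monomial d c) : IsMonomialIdeal (Ideal.span S) := by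
  classical
  intro g hg
  induction hg using Submodule.span_induction with
  | mem s hs =>
    obtain ⟨e, c, rfl⟩ := hS s hs
    intro d
    by_cases hed : e = d
    · subst hed
      simpa only [coeff_monomial, if_true] using SetLike.mem_coe.mp (Ideal.subset_span hs)
    · simp [coeff_monomial, hed]
  | zero => simp
  | add a b _ _ ha hb =>
    intro d
    rw [coeff_add, map_add]
    exact add_mem (ha d) (hb d)
  | smul a x _ hx =>
    intro d
    rw [smul_eq_mul, coeff_mul, map_sum]
    refine Ideal.sum_mem _ fun p hp => ?_
    rw [← mem_antidiagonal.mp hp, ← monomial_mul]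
    exact Ideal.mul_mem_left _ _ (hx p.2)

theorem coeff_mul_eq_coeff_zero_mul_add_sum [CommSemiring R] [DecidableEq σ]
    (u f : MvPolynomial σ R) (d : σ →₀ ℕ) :
    (u * f).coeff d = u.coeff 0 * f.coeff d +
      ∑ p ∈ (antidiagonal d).erase (0, d), u.coeff p.1 * f.coeff p.2 := by
  rw [coeff_mul, ← Finset.add_sum_erase _ _ (a := ((0 : σ →₀ ℕ), d)) (by simp)]

variable [CommRing R] (r : (σ →₀ ℕ) → (σ →₀ ℕ) → Prop) [IsStrictOrder (σ →₀ ℕ) r]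

theorem IsMonomialIdeal.monomial_coeff_mem_of_mul_mem
    (hr : ∀ a b c, r a b → r (a + c) (b + c)) {I : Ideal (MvPolynomial σ R)}
    (hI : IsMonomialIdeal I) {u f : MvPolynomial σ R} (hu₀ : u.coeff 0 = 1)
    (hu : ∀ d ∈ u.support, d ≠ 0 → r d 0) (huf : u * f ∈ I) {d : σ →₀ ℕ}
    (hd : d ∈ f.support) : monomial d (f.coeff d) ∈ I := by
  classical
  refine (f.support.wellFoundedOn (r := Function.swap r)).induction
    (P := fun d => monomial d (f.coeff d) ∈ I) hd fun d _ ih => ?_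
  have hcoeff := coeff_mul_eq_coeff_zero_mul_add_sum u f d
  rw [hu₀, one_mul] at hcoeff
  rw [eq_sub_of_add_eq hcoeff.symm, map_sub, map_sum]
  refine sub_mem (hI _ huf d) (Ideal.sum_mem _ fun p hp => ?_)
  obtain ⟨hp, hpd⟩ := Finset.mem_erase.mp hp
  rw [mem_antidiagonal] at hpd
  by_cases hu₁ : u.coeff p.1 = 0
  · simp [hu₁]
  by_cases hf₂ : f.coeff p.2 = 0
  · simp [hf₂]
  have hp₁ : p.1 ≠ 0 := by
    intro h
    exact hp (Prod.ext h (by rw [← hpd, h, zero_add]))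
  have hdp : r d p.2 := by
    simpa only [← hpd, zero_add] using hr _ _ p.2 (hu p.1 (mem_support_iff.mpr hu₁) hp₁)
  rw [← hpd, ← monomial_mul]
  exact Ideal.mul_mem_left _ _ (ih p.2 (mem_support_iff.mpr hf₂) hdp)

theorem IsMonomialIdeal.mem_of_mul_mem
    (hr : ∀ a b c, r a b → r (a + c) (b + c)) {I : Ideal (MvPolynomial σ R)}
    (hI : IsMonomialIdeal I) {u f : MvPolynomial σ R} (hu₀ : u.coeff 0 = 1)
    (hu : ∀ d ∈ u.support, d ≠ 0 → r d 0) (huf : u * f ∈ I) : f ∈ I := by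
  rw [f.as_sum]
  exact Ideal.sum_mem _ fun d hd => hI.monomial_coeff_mem_of_mul_mem r hr hu₀ hu huf hd

end MvPolynomial

/-- Let `J ⊆ R[t,x]` be an ideal generated by terms and `>` a
`t`-local monomial ordering.  If `u·f ∈ J` and `lt_>(u) = 1` (i.e. the monomial
`1` occurs in `u` with coefficient `1` and every other monomial of `u` is
smaller), then `f ∈ J`. -/
theorem mem_of_unit_mul_mem_span_terms {R : Type*} [CommRing R] {n : ℕ}
    (r : (Fin (n + 1) →₀ ℕ) → (Fin (n + 1) →₀ ℕ) → Prop)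
    (hr : IsTLocalMonomialOrder r)
    (S : Set (MvPolynomial (Fin (n + 1)) R))
    (hS : ∀ s ∈ S, ∃ (d : Fin (n + 1) →₀ ℕ) (c : R), s = monomial d c)
    (J : Ideal (MvPolynomial (Fin (n + 1)) R)) (hJ : J = Ideal.span S)
    (u f : MvPolynomial (Fin (n + 1)) R)
    (hu1 : u.coeff 0 = 1)
    (hu2 : ∀ d ∈ u.support, d ≠ 0 → r d 0)
    (huf : u * f ∈ J) :
    f ∈ J := by
  obtain ⟨-, hirr, htrans, hadd, -⟩ := hr
  have : IsStrictOrder _ r := { irrefl := hirr, trans := htrans }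
  subst hJ
  exact (isMonomialIdeal_span hS).mem_of_mul_mem r hadd hu1 hu2 huf
end

section
/- Let R be a commutative ring and g a nonzero element of R⟦t⟧[x_1,...,x_n]. Then as w ranges over ℝ_{<0} × ℝ^n, the element g has only finitely many distinct initial forms in_w(g). -/
open MvPolynomial

noncomputable section

variable {R : Type*} [CommRing R] {n : ℕ}

/-- The mixed power-series–polynomial ring `R⟦t⟧[x₁,…,xₙ]`. -/
abbrev MixedRing (R : Type*) [CommRing R] (n : ℕ) :=
  MvPolynomial (Fin n) (PowerSeries R)

/-- The polynomial ring `R[t][x₁,…,xₙ] = R[t,x]`. -/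
abbrev PolyRing (R : Type*) [CommRing R] (n : ℕ) :=
  MvPolynomial (Fin n) (Polynomial R)

/-- A monomial `t^β x^α` is encoded as the pair `(α, β)`. -/
abbrev Mon (n : ℕ) := (Fin n →₀ ℕ) × ℕ

/-- The coefficient of `f ∈ R⟦t⟧[x]` at the monomial `t^β x^α`. -/
def coeffAt (f : MixedRing R n) (m : Mon n) : R :=
  PowerSeries.coeff (R := R) m.2 (MvPolynomial.coeff m.1 f)

/-- The coefficient of `q ∈ R[t,x]` at the monomial `t^β x^α`. -/
def coeffAtP (q : PolyRing R n) (m : Mon n) : R :=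
  (MvPolynomial.coeff m.1 q).coeff m.2

/-- The `w`-weighted degree of the monomial `t^β x^α`, where `w = (w₀, w₁,…,wₙ)`. -/
def wdeg (w0 : ℝ) (w : Fin n → ℝ) (m : Mon n) : ℝ :=
  w0 * m.2 + ∑ i, w i * (m.1 i : ℝ)

/-- The maximal `w`-weighted degree of a term of `f ∈ R⟦t⟧[x]`
(as a supremum; it is attained when `w₀ < 0` and `f ≠ 0`). -/
def maxdeg (w0 : ℝ) (w : Fin n → ℝ) (f : MixedRing R n) : ℝ :=
  sSup (wdeg w0 w '' {m | coeffAt f m ≠ 0})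

/-- The least power of `t` occurring in a power series `s` (junk value `0` for `s = 0`). -/
def tord (s : PowerSeries R) : ℕ :=
  sInf {k | PowerSeries.coeff (R := R) k s ≠ 0}

open Classical in
/-- The initial form `in_w(f)` of `f ∈ R⟦t⟧[x]` with respect to the weight
vector `w = (w₀, w) ∈ ℝ_{<0} × ℝⁿ`: the sum of the terms of `f` of maximal
`w`-weighted degree.  Since `w₀ < 0`, for each `x`-monomial `x^α` only the term
of least `t`-order can contribute, so the initial form is a polynomial in
`R[t,x]`. -/
def initialForm (w0 : ℝ) (w : Fin n → ℝ) (f : MixedRing R n) : PolyRing R n :=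
  ∑ α ∈ f.support,
    if wdeg w0 w (α, tord (MvPolynomial.coeff α f)) = maxdeg w0 w f then
      MvPolynomial.monomial α
        (Polynomial.monomial (tord (MvPolynomial.coeff α f))
          (PowerSeries.coeff (R := R) (tord (MvPolynomial.coeff α f)) (MvPolynomial.coeff α f)))
    else 0

/-- `r` is a `t`-local monomial ordering on `Mon(t,x)`: a strict total order
(`r a b` meaning `a < b`) compatible with the semigroup structure and with
`t < 1` (so that leading monomials — the largest monomials occurring — of unit
power series are `1`). -/
def IsTLocalOrder (r : Mon n → Mon n → Prop) : Prop :=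
  (∀ a b, a ≠ b → r a b ∨ r b a) ∧ (∀ a, ¬ r a a) ∧
  (∀ a b c, r a b → r b c → r a c) ∧
  (∀ a b c, r a b → r (a + c) (b + c)) ∧
  r ((0 : Fin n →₀ ℕ), 1) ((0 : Fin n →₀ ℕ), 0)

/-- `f ∈ R⟦t⟧[x]` has leading term `c · t^β x^α` (with `m = (α,β)`) with respect
to the ordering `r`: the coefficient of `f` at `m` is `c ≠ 0` and every other
monomial occurring in `f` is `r`-smaller than `m`. -/
def IsLeadingTerm (r : Mon n → Mon n → Prop) (f : MixedRing R n) (m : Mon n) (c : R) : Prop :=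
  coeffAt f m = c ∧ c ≠ 0 ∧ ∀ m', coeffAt f m' ≠ 0 → m' = m ∨ r m' m

/-- Leading-term predicate for elements of `R[t,x]`. -/
def IsLeadingTermP (r : Mon n → Mon n → Prop) (q : PolyRing R n) (m : Mon n) (c : R) : Prop :=
  coeffAtP q m = c ∧ c ≠ 0 ∧ ∀ m', coeffAtP q m' ≠ 0 → m' = m ∨ r m' m

/-- The term `c · t^β x^α` as an element of `R[t,x]`. -/
def termA (m : Mon n) (c : R) : PolyRing R n :=
  MvPolynomial.monomial m.1 (Polynomial.monomial m.2 c)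

/-- The leading ideal `lt_>(I) ⊆ R[t,x]` of an ideal `I ⊆ R⟦t⟧[x]`. -/
def ltIdeal (r : Mon n → Mon n → Prop) (I : Ideal (MixedRing R n)) : Ideal (PolyRing R n) :=
  Ideal.span {q | ∃ f ∈ I, ∃ m c, IsLeadingTerm r f m c ∧ q = termA m c}

/-- The ideal of `R[t,x]` generated by the leading terms of a finite set `G ⊆ R⟦t⟧[x]`. -/
def ltSpan (r : Mon n → Mon n → Prop) (G : Finset (MixedRing R n)) : Ideal (PolyRing R n) :=
  Ideal.span {q | ∃ f ∈ G, ∃ m c, IsLeadingTerm r f m c ∧ q = termA m c}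

/-- The leading ideal of an ideal `J ⊆ R[t,x]`. -/
def ltIdealP (r : Mon n → Mon n → Prop) (J : Ideal (PolyRing R n)) : Ideal (PolyRing R n) :=
  Ideal.span {q | ∃ f ∈ J, ∃ m c, IsLeadingTermP r f m c ∧ q = termA m c}

/-- The initial ideal `in_w(I) ⊆ R[t,x]` of an ideal `I ⊆ R⟦t⟧[x]`. -/
def initialIdeal (w0 : ℝ) (w : Fin n → ℝ) (I : Ideal (MixedRing R n)) : Ideal (PolyRing R n) :=
  Ideal.span {q | ∃ f ∈ I, q = initialForm w0 w f}

/-- `f ∈ R⟦t⟧[x]` is `x`-homogeneous: all monomials occurring in `f` have the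
same total degree in the variables `x₁,…,xₙ`. -/
def IsXHomogeneous (f : MixedRing R n) : Prop :=
  ∃ d, ∀ α ∈ f.support, (α.sum fun _ e => e) = d

/-- An ideal `I ⊆ R⟦t⟧[x]` is `x`-homogeneous if it is generated by
`x`-homogeneous elements. -/
def Ideal.IsXHomogeneousIdeal (I : Ideal (MixedRing R n)) : Prop :=
  ∃ S : Set (MixedRing R n), (∀ f ∈ S, IsXHomogeneous f) ∧ I = Ideal.span S

/-- The `t`-initial truncation `Σ_α lt_>(g_α)·x^α` of `g = Σ_α g_α·x^α ∈ R⟦t⟧[x]`,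
keeping for each `x`-monomial only the term of least `t`-power. -/
def tTrunc (g : MixedRing R n) : MixedRing R n :=
  ∑ α ∈ g.support,
    MvPolynomial.monomial α
      ((PowerSeries.monomial (R := R) (tord (MvPolynomial.coeff α g)))
        (PowerSeries.coeff (R := R) (tord (MvPolynomial.coeff α g)) (MvPolynomial.coeff α g)))

/-- `G` is a standard basis of the ideal `I ⊆ R⟦t⟧[x]` with respect to `r`:
`G ⊆ I` and the leading terms of the elements of `G` generate the leading
ideal of `I`. -/
def IsStandardBasis (r : Mon n → Mon n → Prop) (I : Ideal (MixedRing R n))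
    (G : Finset (MixedRing R n)) : Prop :=
  ↑G ⊆ (I : Set (MixedRing R n)) ∧ ltSpan r G = ltIdeal r I

open Classical in
/-- `G` is an initially reduced standard basis of `I` w.r.t. `r`: a standard
basis that is minimal and such that no term of the `t`-initial truncation of
any `g ∈ G`, other than the leading term of `g`, lies in the leading ideal. -/
def IsInitiallyReducedSB (r : Mon n → Mon n → Prop) (I : Ideal (MixedRing R n))
    (G : Finset (MixedRing R n)) : Prop :=
  IsStandardBasis r I G ∧
  (∀ g ∈ G, ltSpan r (G.erase g) ≠ ltSpan r G) ∧
  (∀ g ∈ G, ∀ m, coeffAt (tTrunc g) m ≠ 0 → ¬ (∃ c, IsLeadingTerm r g m c) →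
    termA m (coeffAt (tTrunc g) m) ∉ ltIdeal r I)

/-- The (interior part of the) Gröbner cone `C_>(I)`: the Euclidean closure of
the set of weight vectors `v ∈ ℝ_{<0} × ℝⁿ` with `in_v(I) = lt_>(I)`. -/
def groebnerCone (r : Mon n → Mon n → Prop) (I : Ideal (MixedRing R n)) :
    Set (ℝ × (Fin n → ℝ)) :=
  closure {v : ℝ × (Fin n → ℝ) | v.1 < 0 ∧ initialIdeal v.1 v.2 I = ltIdeal r I}

theorem Finset.finite_setOf_sum_of_subset {ι M : Type*} [AddCommMonoid M] (s : Finset ι)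
    (f : ι → M) : {x | ∃ t ⊆ s, ∑ i ∈ t, f i = x}.Finite := by
  classical
  exact (s.powerset.image fun t => ∑ i ∈ t, f i).finite_toSet.subset fun _ ⟨t, hts, hx⟩ => by
    simpa using ⟨t, hts, hx⟩

def tInitialTerm (g : MixedRing R n) (α : Fin n →₀ ℕ) : PolyRing R n :=
  MvPolynomial.monomial α
    (Polynomial.monomial (tord (MvPolynomial.coeff α g))
      (PowerSeries.coeff (R := R) (tord (MvPolynomial.coeff α g)) (MvPolynomial.coeff α g)))

open Classical in
theorem initialForm_eq_sum_filter (w0 : ℝ) (w : Fin n → ℝ) (g : MixedRing R n) :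
    initialForm w0 w g = ∑ α ∈ g.support.filter
      (fun α => wdeg w0 w (α, tord (MvPolynomial.coeff α g)) = maxdeg w0 w g),
      tInitialTerm g α := by
  rw [Finset.sum_filter]
  rfl

theorem finite_initialForms_general (g : MixedRing R n) :
    {q : PolyRing R n | ∃ w0 : ℝ, w0 < 0 ∧ ∃ w : Fin n → ℝ, initialForm w0 w g = q}.Finite := by
  refine (g.support.finite_setOf_sum_of_subset (tInitialTerm g)).subset ?_
  rintro q ⟨w0, -, w, rfl⟩
  classical
  exact ⟨_, Finset.filter_subset _ _, (initialForm_eq_sum_filter w0 w g).symm⟩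

/-- A nonzero element `g ∈ R⟦t⟧[x₁,…,xₙ]` has only finitely
many distinct initial forms `in_w(g)` as `w` ranges over `ℝ_{<0} × ℝⁿ`. -/
theorem finite_initialForms (g : MixedRing R n) (hg : g ≠ 0) :
    {q : PolyRing R n | ∃ w0 : ℝ, w0 < 0 ∧ ∃ w : Fin n → ℝ, initialForm w0 w g = q}.Finite :=
  finite_initialForms_general g

end
end

section
/- Let R be a commutative ring, g ∈ R⟦t⟧[x_1,...,x_n], w ∈ ℝ_{<0}×ℝ^n, and v ∈ ℝ^{n+1}. Then there exists ε_0 > 0 such that for all 0 < ε < ε_0, in_{w+εv}(g) = in_v(in_w(g)). -/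
open MvPolynomial

noncomputable section

variable {R : Type*} [CommRing R] {n : ℕ}

/-- The maximal `v`-weighted degree of a term of a polynomial `q ∈ R[t,x]`. -/
def maxdegP (v0 : ℝ) (v : Fin n → ℝ) (q : PolyRing R n) : ℝ :=
  sSup (wdeg v0 v '' {m | coeffAtP q m ≠ 0})

open Classical in
/-- The initial form of a polynomial `q ∈ R[t,x]` with respect to an arbitrary
weight vector `v ∈ ℝ^{n+1}` (well defined since `q` has finitely many terms):
the sum of the terms of `q` of maximal `v`-weighted degree. -/
def initialFormP (v0 : ℝ) (v : Fin n → ℝ) (q : PolyRing R n) : PolyRing R n :=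
  ∑ α ∈ q.support,
    MvPolynomial.monomial α
      (∑ β ∈ (MvPolynomial.coeff α q).support,
        if wdeg v0 v (α, β) = maxdegP v0 v q then
          Polynomial.monomial β ((MvPolynomial.coeff α q).coeff β)
        else 0)

/-! Since `w₀ < 0`, of the terms of an `x`-coefficient `g_α` only the one of least `t`-order can
have maximal weight, so `in_w(g)` is governed by the finitely many weights
`a_α = w · (ord_t g_α, α)` and `b_α = v · (ord_t g_α, α)` for `α ∈ supp g`. For small `ε > 0`
the maxima of `a + ε b` are exactly the lexicographic maxima of `(a, b)`: first maximise `a`, then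
`b` among those, which is how `in_v(in_w(g))` is formed. -/

theorem coeff_tord_ne_zero {s : PowerSeries R} (hs : s ≠ 0) :
    PowerSeries.coeff (R := R) (tord s) s ≠ 0 :=
  Nat.sInf_mem (PowerSeries.exists_coeff_ne_zero_iff_ne_zero.mpr hs)

def lowestTerm (s : PowerSeries R) : Polynomial R :=
  Polynomial.monomial (tord s) (PowerSeries.coeff (R := R) (tord s) s)

@[simp]
theorem lowestTerm_zero : lowestTerm (0 : PowerSeries R) = 0 := by
  simp [lowestTerm]

theorem support_lowestTerm {s : PowerSeries R} (hs : s ≠ 0) :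
    (lowestTerm s).support = {tord s} :=
  Polynomial.support_monomial _ (coeff_tord_ne_zero hs)

theorem lowestTerm_ne_zero {s : PowerSeries R} (hs : s ≠ 0) : lowestTerm s ≠ 0 := by
  simpa [lowestTerm] using coeff_tord_ne_zero hs

theorem coeff_lowestTerm_ne_zero_iff {s : PowerSeries R} {k : ℕ} :
    (lowestTerm s).coeff k ≠ 0 ↔ s ≠ 0 ∧ k = tord s := by
  by_cases hs : s = 0
  · simp [hs]
  · rw [lowestTerm, Polynomial.coeff_monomial]
    split_ifs with h
    · subst h
      simp [hs, coeff_tord_ne_zero hs]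
    · simp [Ne.symm h]

def lowestMon (g : MixedRing R n) (α : Fin n →₀ ℕ) : Mon n :=
  (α, tord (coeff α g))

theorem wdeg_add_mul_smul (w0 v0 ε : ℝ) (w v : Fin n → ℝ) (m : Mon n) :
    wdeg (w0 + ε * v0) (w + ε • v) m = wdeg w0 w m + ε * wdeg v0 v m := by
  simp only [wdeg, Pi.add_apply, Pi.smul_apply, smul_eq_mul, add_mul, Finset.sum_add_distrib,
    mul_assoc, ← Finset.mul_sum]
  ring

open Filter Topology

theorem tendsto_add_mul_nhdsGT (d e : ℝ) :
    Tendsto (fun ε => d + ε * e) (𝓝[>] 0) (𝓝 d) :=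
  ((by fun_prop : Continuous fun ε : ℝ => d + ε * e).tendsto' 0 d (by simp)).mono_left
    nhdsWithin_le_nhds

theorem eventually_nonneg_add_mul_iff (d e : ℝ) :
    ∀ᶠ ε in 𝓝[>] 0, 0 ≤ d + ε * e ↔ 0 < d ∨ d = 0 ∧ 0 ≤ e := by
  rcases lt_trichotomy d 0 with hd | rfl | hd
  · filter_upwards [(tendsto_add_mul_nhdsGT d e).eventually_lt_const hd] with ε hε
    simp only [hε.not_ge, hd.not_gt, hd.ne, false_and, or_self]
  · filter_upwards [self_mem_nhdsWithin] with ε (hε : 0 < ε)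
    simp [mul_nonneg_iff_of_pos_left hε]
  · filter_upwards [(tendsto_add_mul_nhdsGT d e).eventually_const_lt hd] with ε hε
    simp only [hε.le, hd, true_or]

theorem eventually_isMaxOn_add_mul_iff {ι : Type*} {s : Set ι} (hs : s.Finite) (a b : ι → ℝ) :
    ∀ᶠ ε in 𝓝[>] 0, ∀ i ∈ s, IsMaxOn (fun j => a j + ε * b j) s i ↔
      IsMaxOn a s i ∧ IsMaxOn b {j ∈ s | a j = a i} i := by
  have hpairs : ∀ᶠ ε in 𝓝[>] 0, ∀ i ∈ s, ∀ j ∈ s,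
      0 ≤ (a i - a j) + ε * (b i - b j) ↔ 0 < a i - a j ∨ a i - a j = 0 ∧ 0 ≤ b i - b j := by
    simp only [hs.eventually_all]
    exact fun i _ j _ => eventually_nonneg_add_mul_iff _ _
  filter_upwards [hpairs] with ε hε i hi
  simp only [isMaxOn_iff, Set.mem_ofPred_eq, and_imp]
  constructor
  · intro h
    refine ⟨fun j hj => ?_, fun j hj hji => ?_⟩ <;>
      rcases (hε i hi j hj).1 (by linarith [h j hj]) with h' | ⟨h', h''⟩ <;> linarith
  · rintro ⟨ha, hb⟩ j hj
    have := (hε i hi j hj).2 <| (ha j hj).lt_or_eq.imp sub_pos.2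
      fun h => ⟨sub_eq_zero.2 h.symm, sub_nonneg.2 (hb j hj h)⟩
    linarith

theorem apply_eq_csSup_image_iff_isMaxOn {ι κ : Type*} {X : Set ι} {S : Set κ} (hS : S.Finite)
    {f : ι → ℝ} {φ : κ → ι} (hφ : ∀ k ∈ S, φ k ∈ X) (hdom : ∀ x ∈ X, ∃ k ∈ S, f x ≤ f (φ k))
    {k : κ} (hk : k ∈ S) :
    f (φ k) = sSup (f '' X) ↔ IsMaxOn (f ∘ φ) S k := by
  have hbdd : BddAbove (f '' X) := by
    obtain ⟨M, hM⟩ := (hS.image (f ∘ φ)).bddAbove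
    refine ⟨M, ?_⟩
    rintro _ ⟨x, hx, rfl⟩
    obtain ⟨k', hk', hle⟩ := hdom x hx
    exact hle.trans (hM ⟨k', hk', rfl⟩)
  constructor
  · intro h
    exact isMaxOn_iff.2 fun k' hk' => (le_csSup hbdd ⟨_, hφ k' hk', rfl⟩).trans_eq h.symm
  · intro h
    have hgreatest : IsGreatest (f '' X) (f (φ k)) := by
      refine ⟨⟨φ k, hφ k hk, rfl⟩, ?_⟩
      rintro _ ⟨x, hx, rfl⟩
      obtain ⟨k', hk', hle⟩ := hdom x hx
      exact hle.trans (isMaxOn_iff.1 h k' hk')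
    exact hgreatest.csSup_eq.symm

open Classical in
theorem coeff_initialFormP (v0 : ℝ) (v : Fin n → ℝ) (q : PolyRing R n) (α : Fin n →₀ ℕ) :
    coeff α (initialFormP v0 v q) =
      ∑ β ∈ (coeff α q).support,
        if wdeg v0 v (α, β) = maxdegP v0 v q then Polynomial.monomial β ((coeff α q).coeff β)
        else 0 := by
  rw [initialFormP, coeff_sum]
  simp only [coeff_monomial, Finset.sum_ite_eq']
  split_ifs with h
  · rfl
  · simp [notMem_support_iff.1 h]

section

variable {u0 : ℝ} (u : Fin n → ℝ) {g : MixedRing R n} {α : Fin n →₀ ℕ}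

theorem wdeg_lowestMon_eq_maxdeg_iff (hu0 : u0 < 0) (hα : α ∈ g.support) :
    wdeg u0 u (lowestMon g α) = maxdeg u0 u g ↔
      IsMaxOn (fun β => wdeg u0 u (lowestMon g β)) g.support α := by
  refine apply_eq_csSup_image_iff_isMaxOn g.support.finite_toSet
    (fun β hβ => coeff_tord_ne_zero (mem_support_iff.1 hβ)) ?_ hα
  rintro ⟨β, k⟩ (hm : PowerSeries.coeff (R := R) k (coeff β g) ≠ 0)
  refine ⟨β, mem_support_iff.2 fun h => hm (by simp [h]), ?_⟩
  have hk : (tord (coeff β g) : ℝ) ≤ k := by exact_mod_cast Nat.sInf_le hm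
  simp only [wdeg, lowestMon]
  linarith [mul_le_mul_of_nonpos_left hk hu0.le]

open Classical in
theorem coeff_initialForm (hu0 : u0 < 0) :
    coeff α (initialForm u0 u g) =
      if IsMaxOn (fun β => wdeg u0 u (lowestMon g β)) g.support α then lowestTerm (coeff α g)
      else 0 := by
  have hsum : initialForm u0 u g = ∑ β ∈ g.support, monomial β
      (if wdeg u0 u (lowestMon g β) = maxdeg u0 u g then lowestTerm (coeff β g) else 0) := by
    simp only [initialForm, apply_ite (monomial _), map_zero]
    rfl
  rw [hsum, coeff_sum]
  simp only [coeff_monomial, Finset.sum_ite_eq']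
  by_cases hα : α ∈ g.support
  · exact (if_pos hα).trans (if_congr (wdeg_lowestMon_eq_maxdeg_iff u hu0 hα) rfl rfl)
  · simp [hα, notMem_support_iff.1 hα]

theorem mem_support_initialForm (hu0 : u0 < 0) :
    α ∈ (initialForm u0 u g).support ↔
      α ∈ g.support ∧ IsMaxOn (fun β => wdeg u0 u (lowestMon g β)) g.support α := by
  rw [mem_support_iff, coeff_initialForm u hu0]
  by_cases hα : α ∈ g.support
  · simp [hα, lowestTerm_ne_zero (mem_support_iff.1 hα)]
  · simp [hα, notMem_support_iff.1 hα]

theorem coeffAtP_initialForm_ne_zero_iff (hu0 : u0 < 0) {m : Mon n} :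
    coeffAtP (initialForm u0 u g) m ≠ 0 ↔
      m.1 ∈ (initialForm u0 u g).support ∧ m = lowestMon g m.1 := by
  classical
  simp only [coeffAtP, lowestMon, Prod.ext_iff, true_and]
  rw [coeff_initialForm u hu0, mem_support_initialForm u hu0]
  split_ifs with h
  · rw [coeff_lowestTerm_ne_zero_iff, mem_support_iff]
    tauto
  · simp [h]

theorem wdeg_lowestMon_eq_maxdegP_initialForm_iff (hu0 : u0 < 0) (v0 : ℝ) (v : Fin n → ℝ)
    (hα : α ∈ (initialForm u0 u g).support) :
    wdeg v0 v (lowestMon g α) = maxdegP v0 v (initialForm u0 u g) ↔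
      IsMaxOn (fun β => wdeg v0 v (lowestMon g β)) (initialForm u0 u g).support α :=
  apply_eq_csSup_image_iff_isMaxOn (initialForm u0 u g).support.finite_toSet
    (fun _ hβ => (coeffAtP_initialForm_ne_zero_iff u hu0).2 ⟨hβ, rfl⟩)
    (fun m hm => have hm := (coeffAtP_initialForm_ne_zero_iff u hu0).1 hm
      ⟨m.1, hm.1, (congrArg _ hm.2).le⟩) hα

theorem setOf_wdeg_lowestMon_eq_eq_support_initialForm (hu0 : u0 < 0)
    (hα : α ∈ (initialForm u0 u g).support) :
    {β ∈ (g.support : Set _) | wdeg u0 u (lowestMon g β) = wdeg u0 u (lowestMon g α)} =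
      (initialForm u0 u g).support := by
  obtain ⟨hαg, hαmax⟩ := (mem_support_initialForm u hu0).1 hα
  ext β
  simp only [Set.mem_ofPred_eq, Finset.mem_coe, mem_support_initialForm u hu0, isMaxOn_iff]
  refine and_congr_right fun hβ => ⟨fun h γ hγ => h ▸ isMaxOn_iff.1 hαmax γ hγ, fun h => ?_⟩
  exact le_antisymm (isMaxOn_iff.1 hαmax β hβ) (h α hαg)

open Classical in
theorem coeff_initialFormP_initialForm (hu0 : u0 < 0) (v0 : ℝ) (v : Fin n → ℝ) :
    coeff α (initialFormP v0 v (initialForm u0 u g)) =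
      if IsMaxOn (fun β => wdeg u0 u (lowestMon g β)) g.support α ∧
          IsMaxOn (fun β => wdeg v0 v (lowestMon g β))
            {β ∈ (g.support : Set _) | wdeg u0 u (lowestMon g β) = wdeg u0 u (lowestMon g α)} α
        then lowestTerm (coeff α g)
      else 0 := by
  rw [coeff_initialFormP]
  by_cases hα : α ∈ (initialForm u0 u g).support
  · obtain ⟨hαg, hαmax⟩ := (mem_support_initialForm u hu0).1 hα
    rw [coeff_initialForm u hu0, if_pos hαmax, support_lowestTerm (mem_support_iff.1 hαg),
      Finset.sum_singleton, setOf_wdeg_lowestMon_eq_eq_support_initialForm u hu0 hα]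
    simp only [hαmax, true_and]
    exact if_congr (wdeg_lowestMon_eq_maxdegP_initialForm_iff u hu0 v0 v hα)
      (by simp [lowestTerm]) rfl
  · rw [notMem_support_iff.1 hα, Polynomial.support_zero, Finset.sum_empty]
    by_cases hαg : α ∈ g.support
    · exact (if_neg fun h => hα ((mem_support_initialForm u hu0).2 ⟨hαg, h.1⟩)).symm
    · simp [notMem_support_iff.1 hαg]

end

/-- For `g ∈ R⟦t⟧[x]`, `w ∈ ℝ_{<0} × ℝⁿ` and `v ∈ ℝ^{n+1}`,
there is `ε₀ > 0` such that for all `0 < ε < ε₀` the vector `w + εv` still lies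
in `ℝ_{<0} × ℝⁿ` and `in_{w+εv}(g) = in_v(in_w(g))`. -/
theorem initialForm_perturbation (g : MixedRing R n)
    (w0 : ℝ) (hw0 : w0 < 0) (w : Fin n → ℝ) (v0 : ℝ) (v : Fin n → ℝ) :
    ∃ ε0 : ℝ, 0 < ε0 ∧ ∀ ε : ℝ, 0 < ε → ε < ε0 →
      w0 + ε * v0 < 0 ∧
      initialForm (w0 + ε * v0) (w + ε • v) g =
        initialFormP v0 v (initialForm w0 w g) := by
  classical
  have hneg : ∀ᶠ ε in 𝓝[>] 0, w0 + ε * v0 < 0 :=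
    (tendsto_add_mul_nhdsGT w0 v0).eventually_lt_const hw0
  have hperturb := eventually_isMaxOn_add_mul_iff g.support.finite_toSet
    (fun β => wdeg w0 w (lowestMon g β)) (fun β => wdeg v0 v (lowestMon g β))
  obtain ⟨ε0, hε0, hsub⟩ := mem_nhdsGT_iff_exists_Ioo_subset.1 (hneg.and hperturb)
  refine ⟨ε0, hε0, fun ε hε hεε0 => ?_⟩
  obtain ⟨hu0, hmax⟩ := hsub ⟨hε, hεε0⟩
  refine ⟨hu0, MvPolynomial.ext _ _ fun α => ?_⟩
  rw [coeff_initialForm _ hu0, coeff_initialFormP_initialForm _ hw0]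
  by_cases hα : α ∈ g.support
  · exact if_congr (by simpa only [wdeg_add_mul_smul] using hmax α hα) rfl rfl
  · simp [notMem_support_iff.1 hα]

end
end
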